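/- With f and g as constructed (g having break point at f(b_k) in [b_k, b_{k+1}] with g(f(b_k)) = (b_k + f(b_k))/2 and g(b_k) = b_k), one has f(g(b_k)) − g(f(b_k)) = (f(b_k) − b_k)/2 for all k; consequently if f(bₖ) − bₖ → ∞ then sup_t |f(g(t)) − g(f(t))| = ∞ and [f] and [g] do not commute in QI(ℝ). -/

import Mathlib

/-- `f` is a `K`-quasi-isometric embedding. -/
def QIEmb {X Y : Type*} [PseudoMetricSpace X] [PseudoMetricSpace Y] (K : ℝ) (f : X → Y) : Prop :=
  1 < K ∧ ∀ x₁ x₂ : X, dist x₁ x₂ / K - K ≤ dist (f x₁) (f x₂) ∧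
    dist (f x₁) (f x₂) ≤ K * dist x₁ x₂ + K

/-- `f` is a `K`-quasi-isometry: a `K`-quasi-isometric embedding with `K`-dense image. -/
def QIsom {X Y : Type*} [PseudoMetricSpace X] [PseudoMetricSpace Y] (K : ℝ) (f : X → Y) : Prop :=
  QIEmb K f ∧ ∀ y : Y, ∃ x : X, dist (f x) y < K

/-- `f` is a quasi-isometry for some constant `K > 1`. -/
def IsQI {X Y : Type*} [PseudoMetricSpace X] [PseudoMetricSpace Y] (f : X → Y) : Prop :=
  ∃ K : ℝ, QIsom K f

/-- Two maps are equivalent (close) if they are within bounded sup-distance. -/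
def Close {X Y : Type*} [PseudoMetricSpace X] [PseudoMetricSpace Y] (f g : X → Y) : Prop :=
  ∃ M : ℝ, ∀ x : X, dist (f x) (g x) ≤ M

/-- `f` is piecewise linear: near every point it is affine on both sides
(so the break points form a discrete set). -/
def IsPL (f : ℝ → ℝ) : Prop :=
  ∀ x : ℝ, ∃ ε > (0:ℝ), ∃ a b c d : ℝ,
    (∀ t ∈ Set.Icc (x - ε) x, f t = a * t + b) ∧
    (∀ t ∈ Set.Icc x (x + ε), f t = c * t + d)

/-- The set of slopes `Λ(f)` of a piecewise linear map. -/
def slopes (f : ℝ → ℝ) : Set ℝ :=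
  {a : ℝ | ∃ b x y : ℝ, x < y ∧ ∀ t ∈ Set.Icc x y, f t = a * t + b}

/-- `f ∈ PL_δ(ℝ)`: a piecewise linear homeomorphism of `ℝ` whose slope set is bounded
away from `0` and `∞`. -/
def IsPLd (f : ℝ → ℝ) : Prop :=
  IsPL f ∧ Function.Bijective f ∧
    ∃ M : ℝ, 1 < M ∧ ∀ a ∈ slopes f, M⁻¹ < |a| ∧ |a| < M

/-- `f` is the identity near `-∞`. -/
def IdNearNegInf (f : ℝ → ℝ) : Prop := ∃ N : ℝ, ∀ t ≤ N, f t = t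

/-- `f` is the identity near `+∞`. -/
def IdNearPosInf (f : ℝ → ℝ) : Prop := ∃ N : ℝ, ∀ t ≥ N, f t = t

open Filter in
/-- The midpoint-displacement map: `g = id` on `(-∞, b 0]`; on each `[b k, b (k+1)]`, `g`
fixes the endpoints, is affine with slope `1/2` on `[b k, f (b k)]` and affine on
`[f (b k), b (k+1)]`. -/
def MidSpec (f : ℝ → ℝ) (b : ℕ → ℝ) (g : ℝ → ℝ) : Prop :=
  (∀ t ≤ b 0, g t = t) ∧
  ∀ k : ℕ,
    (∀ t ∈ Set.Icc (b k) (f (b k)), g t = b k + (t - b k) / 2) ∧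
    (∀ t ∈ Set.Icc (f (b k)) (b (k + 1)),
      g t = (b k + f (b k)) / 2 +
        ((b (k + 1) - (b k + f (b k)) / 2) / (b (k + 1) - f (b k))) * (t - f (b k)))

namespace MidSpec

variable {f g : ℝ → ℝ} {b : ℕ → ℝ}

theorem apply_base (hg : MidSpec f b g) {k : ℕ} (hk : b k ≤ f (b k)) : g (b k) = b k := by
  rw [(hg.2 k).1 (b k) ⟨le_rfl, hk⟩]
  ring

theorem apply_image_base (hg : MidSpec f b g) {k : ℕ} (hk : b k ≤ f (b k)) :
    g (f (b k)) = (b k + f (b k)) / 2 := by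
  rw [(hg.2 k).1 (f (b k)) ⟨hk, le_rfl⟩]
  ring

theorem comp_sub_comp_base (hg : MidSpec f b g) {k : ℕ} (hk : b k ≤ f (b k)) :
    f (g (b k)) - g (f (b k)) = (f (b k) - b k) / 2 := by
  rw [hg.apply_base hk, hg.apply_image_base hk]
  ring

end MidSpec

open Filter in
theorem not_close_of_tendsto_dist {X Y : Type*} [PseudoMetricSpace X] [PseudoMetricSpace Y]
    {φ ψ : X → Y} {x : ℕ → X} (h : Tendsto (fun n => dist (φ (x n)) (ψ (x n))) atTop atTop) :
    ¬ Close φ ψ := by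
  rintro ⟨M, hM⟩
  obtain ⟨n, hn⟩ := (h.eventually_gt_atTop M).exists
  exact (hM (x n)).not_gt hn

open Filter in
theorem midspec_noncommuting_general (f : ℝ → ℝ) (b : ℕ → ℝ) (hfb : ∀ n, b n < f (b n))
    (hdiv : Tendsto (fun n => f (b n) - b n) atTop atTop)
    (g : ℝ → ℝ) (hg : MidSpec f b g) :
    (∀ k : ℕ, f (g (b k)) - g (f (b k)) = (f (b k) - b k) / 2) ∧
    ¬ Close (f ∘ g) (g ∘ f) := by
  have defect (k : ℕ) := hg.comp_sub_comp_base (hfb k).le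
  refine ⟨defect, not_close_of_tendsto_dist (x := b) ?_⟩
  have hdist (n : ℕ) : dist ((f ∘ g) (b n)) ((g ∘ f) (b n)) = (f (b n) - b n) / 2 := by
    rw [Function.comp_apply, Function.comp_apply, Real.dist_eq, defect n,
      abs_of_pos (half_pos (sub_pos.2 (hfb n)))]
  simpa only [hdist] using hdiv.atTop_div_const two_pos

open Filter in
/-- With `f ∈ P₊` and `g` as constructed, `f (g (b k)) − g (f (b k)) = (f (b k) − b k)/2`;
hence if `f (bₙ) − bₙ → ∞` then `[f]` and `[g]` do not commute in `QI(ℝ)`. -/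
theorem midspec_noncommuting (f : ℝ → ℝ) (hf : IsPLd f) (hmono : StrictMono f)
    (h0 : f 0 = 0) (hneg : IdNearNegInf f) (b : ℕ → ℝ) (hb : StrictMono b)
    (hpos : ∀ n, 0 < b n) (hfb : ∀ n, b n < f (b n))
    (hgap : ∀ n, 3 * f (b n) < b (n + 1))
    (hdiv : Tendsto (fun n => f (b n) - b n) atTop atTop)
    (g : ℝ → ℝ) (hg : MidSpec f b g) :
    (∀ k : ℕ, f (g (b k)) - g (f (b k)) = (f (b k) - b k) / 2) ∧
    ¬ Close (f ∘ g) (g ∘ f) :=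
  midspec_noncommuting_general f b hfb hdiv g hg
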